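/- arXiv:2603.06747 — 2 statements merged into one kernel-verified Lean document; each statement's English description precedes it below -/
import Mathlib

section
/- For integers n ≥ 3 and m ≥ 2, let S_n be the star graph (the complete bipartite graph K_{1,n}) and P_m the path with m vertices. Then AT(S_n +_R P_m) = 3. -/
open scoped Classical

/-- The outdegree of a vertex `v` in a finite set of arcs `A`. -/
noncomputable def arcOutDeg {V : Type*} (A : Finset (V × V)) (v : V) : ℕ :=
  (A.filter fun a => a.1 = v).card

/-- The indegree of a vertex `v` in a finite set of arcs `A`. -/
noncomputable def arcInDeg {V : Type*} (A : Finset (V × V)) (v : V) : ℕ :=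
  (A.filter fun a => a.2 = v).card

/-- `A` is an orientation of the simple graph `G`: every arc of `A` joins adjacent
vertices, and every edge of `G` receives exactly one of its two possible directions. -/
def IsOrientation {V : Type*} (G : SimpleGraph V) (A : Finset (V × V)) : Prop :=
  (∀ a ∈ A, G.Adj a.1 a.2) ∧ ∀ u v : V, G.Adj u v → ((u, v) ∈ A ↔ (v, u) ∉ A)

/-- A set of arcs is Eulerian if at every vertex the indegree equals the outdegree. -/
def IsEulerianSub {V : Type*} (B : Finset (V × V)) : Prop :=
  ∀ v : V, arcInDeg B v = arcOutDeg B v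

/-- An orientation (given by its arc set `A`) is an Alon–Tarsi orientation if the number
of its even Eulerian sub-digraphs differs from the number of its odd Eulerian
sub-digraphs. -/
def IsATOrientation {V : Type*} (A : Finset (V × V)) : Prop :=
  (A.powerset.filter fun B => IsEulerianSub B ∧ Even B.card).card ≠
    (A.powerset.filter fun B => IsEulerianSub B ∧ ¬ Even B.card).card

/-- The Alon–Tarsi number of `G`: the least `k` such that `G` has an Alon–Tarsi
orientation with maximum outdegree at most `k - 1` (i.e. `< k`). -/
noncomputable def alonTarsiNumber {V : Type*} (G : SimpleGraph V) : ℕ :=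
  sInf {k : ℕ | ∃ A : Finset (V × V),
    IsOrientation G A ∧ IsATOrientation A ∧ ∀ v : V, arcOutDeg A v < k}

/-- A graph is `k`-degenerate if every nonempty (induced) subgraph has a vertex of
degree at most `k`. -/
def Degenerate {V : Type*} (k : ℕ) (G : SimpleGraph V) : Prop :=
  ∀ s : Finset V, s.Nonempty → ∃ v ∈ s, (s.filter fun u => G.Adj v u).card ≤ k

/-- The subdivision graph `S(G)`: each edge `uv` of `G` is replaced by a path `u-e-v`
through the new vertex `e` corresponding to `uv`. -/
def subdivisionGraph {V : Type*} (G : SimpleGraph V) : SimpleGraph (V ⊕ ↥G.edgeSet) :=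
  SimpleGraph.fromRel fun a b =>
    match a, b with
    | Sum.inl u, Sum.inr e => u ∈ (e : Sym2 V)
    | _, _ => False

/-- The graph `R(G)`: `G` together with, for each edge `uv`, a new vertex joined to
`u` and `v`. -/
def rGraph {V : Type*} (G : SimpleGraph V) : SimpleGraph (V ⊕ ↥G.edgeSet) :=
  SimpleGraph.fromRel fun a b =>
    match a, b with
    | Sum.inl u, Sum.inl v => G.Adj u v
    | Sum.inl u, Sum.inr e => u ∈ (e : Sym2 V)
    | _, _ => False

/-- The graph `Q(G)`: new vertices joined to the endpoints of their edges, and two new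
vertices joined iff the corresponding edges of `G` share an endpoint; original
vertices are pairwise nonadjacent. -/
def qGraph {V : Type*} (G : SimpleGraph V) : SimpleGraph (V ⊕ ↥G.edgeSet) :=
  SimpleGraph.fromRel fun a b =>
    match a, b with
    | Sum.inl u, Sum.inr e => u ∈ (e : Sym2 V)
    | Sum.inr e, Sum.inr f => e ≠ f ∧ ∃ u : V, u ∈ (e : Sym2 V) ∧ u ∈ (f : Sym2 V)
    | _, _ => False

/-- The total graph `T(G)`. -/
def tGraph {V : Type*} (G : SimpleGraph V) : SimpleGraph (V ⊕ ↥G.edgeSet) :=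
  SimpleGraph.fromRel fun a b =>
    match a, b with
    | Sum.inl u, Sum.inl v => G.Adj u v
    | Sum.inl u, Sum.inr e => u ∈ (e : Sym2 V)
    | Sum.inr e, Sum.inr f => e ≠ f ∧ ∃ u : V, u ∈ (e : Sym2 V) ∧ u ∈ (f : Sym2 V)
    | _, _ => False

/-- The `F`-sum construction: given a graph `K` on `V ⊕ E` (playing the role of `F(G)`,
whose "original" vertices are those of the form `Sum.inl u`) and a graph `H` on `W`,
two vertices `(u₁, u₂)` and `(v₁, v₂)` are adjacent iff either `u₁ = v₁` is an original
vertex and `u₂v₂ ∈ E(H)`, or `u₂ = v₂` and `u₁v₁ ∈ E(K)`. -/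
def fSum {V E W : Type*} (K : SimpleGraph (V ⊕ E)) (H : SimpleGraph W) :
    SimpleGraph ((V ⊕ E) × W) :=
  SimpleGraph.fromRel fun a b =>
    (a.1 = b.1 ∧ (∃ u : V, a.1 = Sum.inl u) ∧ H.Adj a.2 b.2) ∨
      (a.2 = b.2 ∧ K.Adj a.1 b.1)

/-- The `S`-sum `G +_S H`. -/
def sSum {V W : Type*} (G : SimpleGraph V) (H : SimpleGraph W) :
    SimpleGraph ((V ⊕ ↥G.edgeSet) × W) :=
  fSum (subdivisionGraph G) H

/-- The `R`-sum `G +_R H`. -/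
def rSum {V W : Type*} (G : SimpleGraph V) (H : SimpleGraph W) :
    SimpleGraph ((V ⊕ ↥G.edgeSet) × W) :=
  fSum (rGraph G) H

/-- The `Q`-sum `G +_Q H`. -/
def qSum {V W : Type*} (G : SimpleGraph V) (H : SimpleGraph W) :
    SimpleGraph ((V ⊕ ↥G.edgeSet) × W) :=
  fSum (qGraph G) H

/-- The `T`-sum `G +_T H`. -/
def tSum {V W : Type*} (G : SimpleGraph V) (H : SimpleGraph W) :
    SimpleGraph ((V ⊕ ↥G.edgeSet) × W) :=
  fSum (tGraph G) H

/-- The star graph `S_n = K_{1,n}`. -/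
def starGraph (n : ℕ) : SimpleGraph (Fin 1 ⊕ Fin n) :=
  completeBipartiteGraph (Fin 1) (Fin n)

/-! Upper bound: rank each vertex of `S_n +_R P_m` by its layer index plus `2` on the centre,
`1` on the leaves and `0` on the edge vertices, and orient every edge towards the higher rank.
This orientation is acyclic, so its only Eulerian subdigraph is the empty one, and every vertex
has at most two neighbours of higher rank.

Lower bound: if all outdegrees are at most `1`, every subgraph has at most as many edges as
vertices, but each layer is a copy of `R(S_n)`, with `3n` edges on `2n + 1` vertices. -/

open Finset

lemma isEulerianSub_empty {V : Type*} : IsEulerianSub (∅ : Finset (V × V)) := by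
  intro v; simp [arcInDeg, arcOutDeg]

lemma eq_empty_of_isEulerianSub_of_rank {V : Type*} {B : Finset (V × V)} (ρ : V → ℕ)
    (hρ : ∀ a ∈ B, ρ a.1 < ρ a.2) (hB : IsEulerianSub B) : B = ∅ := by
  by_contra hne
  -- an arc of maximal head rank enters a vertex with no arc leaving towards a higher rank
  obtain ⟨b, hb, hmax⟩ := B.exists_max_image (fun a => ρ a.2) (nonempty_iff_ne_empty.2 hne)
  have hin : 0 < arcInDeg B b.2 := card_pos.2 ⟨b, mem_filter.2 ⟨hb, rfl⟩⟩
  obtain ⟨c, hc⟩ := card_pos.1 (hB b.2 ▸ hin)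
  rw [mem_filter] at hc
  have := hρ c hc.1
  have := hmax c hc.1
  rw [hc.2] at *
  omega

lemma isATOrientation_of_rank {V : Type*} {A : Finset (V × V)} (ρ : V → ℕ)
    (hρ : ∀ a ∈ A, ρ a.1 < ρ a.2) : IsATOrientation A := by
  have heul : ∀ B ∈ A.powerset, IsEulerianSub B ↔ B = ∅ := fun B hB =>
    ⟨eq_empty_of_isEulerianSub_of_rank ρ fun a ha => hρ a (mem_powerset.1 hB ha),
      fun h => h ▸ isEulerianSub_empty⟩
  rw [IsATOrientation, filter_congr fun B hB => and_congr_left' (heul B hB),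
    filter_congr fun B hB => and_congr_left' (heul B hB)]
  simp [← filter_filter, filter_eq', filter_singleton]

section RankOrientation

variable {V : Type*} [Fintype V] (G : SimpleGraph V) (ρ : V → ℕ)

noncomputable def rankOrientation : Finset (V × V) :=
  univ.filter fun a => G.Adj a.1 a.2 ∧ ρ a.1 < ρ a.2

noncomputable def upNeighborFinset (v : V) : Finset V :=
  univ.filter fun w => G.Adj v w ∧ ρ v < ρ w

lemma isOrientation_rankOrientation (hρ : ∀ u v, G.Adj u v → ρ u ≠ ρ v) :
    IsOrientation G (rankOrientation G ρ) := by
  refine ⟨fun a ha => (mem_filter.1 ha).2.1, fun u v huv => ?_⟩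
  have := hρ u v huv
  simp only [rankOrientation, mem_filter, mem_univ, true_and, huv, huv.symm]
  omega

lemma isATOrientation_rankOrientation : IsATOrientation (rankOrientation G ρ) :=
  isATOrientation_of_rank ρ fun _ ha => (mem_filter.1 ha).2.2

lemma arcOutDeg_rankOrientation (v : V) :
    arcOutDeg (rankOrientation G ρ) v = #(upNeighborFinset G ρ v) := by
  rw [arcOutDeg, ← card_map (⟨(v, ·), Prod.mk_right_injective v⟩ : V ↪ V × V)]
  refine congrArg card (ext fun ⟨u, w⟩ => ?_)
  simp only [mem_map, mem_filter, rankOrientation, upNeighborFinset, mem_univ, true_and,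
    Function.Embedding.coeFn_mk, Prod.mk.injEq]
  constructor
  · rintro ⟨h, rfl⟩
    exact ⟨w, h, rfl, rfl⟩
  · rintro ⟨w, h, rfl, rfl⟩
    exact ⟨h, rfl⟩

end RankOrientation

section Orientation

variable {V W : Type*} [Fintype W] {G : SimpleGraph V} {A : Finset (V × V)}

lemma card_edgeFinset_le_of_isOrientation [Fintype V] (hA : IsOrientation G A) {d : ℕ}
    (hd : ∀ v, arcOutDeg A v ≤ d) : #G.edgeFinset ≤ d * Fintype.card V := by
  have hsub : G.edgeFinset ⊆ A.image fun a => s(a.1, a.2) := by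
    intro e he
    induction e using Sym2.ind with
    | _ u v =>
      have huv : G.Adj u v := by simpa using he
      by_cases h : (u, v) ∈ A
      · exact mem_image_of_mem _ h
      · exact mem_image.2 ⟨(v, u), by simpa using (hA.2 u v huv).not.1 h, Sym2.eq_swap⟩
  calc #G.edgeFinset ≤ #A := (card_le_card hsub).trans card_image_le
    _ = ∑ v, arcOutDeg A v := card_eq_sum_card_fiberwise fun _ _ => mem_univ _
    _ ≤ ∑ _v : V, d := sum_le_sum fun v _ => hd v
    _ = d * Fintype.card V := by simp [mul_comm]

noncomputable def pullbackArcs (f : W → V) (A : Finset (V × V)) : Finset (W × W) :=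
  univ.filter fun a => (f a.1, f a.2) ∈ A

lemma isOrientation_pullbackArcs {H : SimpleGraph W} (f : H ↪g G) (hA : IsOrientation G A) :
    IsOrientation H (pullbackArcs f A) := by
  refine ⟨fun a ha => ?_, fun u v huv => ?_⟩
  · exact f.map_adj_iff.1 (hA.1 _ (mem_filter.1 ha).2)
  · simpa [pullbackArcs] using hA.2 (f u) (f v) (f.map_adj_iff.2 huv)

lemma arcOutDeg_pullbackArcs_le {f : W → V} (hf : Function.Injective f) (v : W) :
    arcOutDeg (pullbackArcs f A) v ≤ arcOutDeg A (f v) := by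
  refine card_le_card_of_injOn (Prod.map f f) (fun a ha => ?_) (hf.prodMap hf).injOn
  simp only [pullbackArcs, coe_filter, mem_filter, mem_univ, true_and] at ha ⊢
  exact ⟨ha.1, congrArg f ha.2⟩

end Orientation

lemma alonTarsiNumber_eq {V : Type*} {G : SimpleGraph V} {k : ℕ}
    (hex : ∃ A, IsOrientation G A ∧ IsATOrientation A ∧ ∀ v, arcOutDeg A v < k)
    (hle : ∀ A k', IsOrientation G A → IsATOrientation A → (∀ v, arcOutDeg A v < k') →
      k ≤ k') :
    alonTarsiNumber G = k :=
  le_antisymm (Nat.sInf_le hex) <|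
    le_csInf ⟨k, hex⟩ fun _ ⟨A, hA, hAT, hk⟩ => hle A _ hA hAT hk

section rGraph

variable {V : Type*} {G : SimpleGraph V}

@[simp] lemma rGraph_adj_inl_inl {u v : V} : (rGraph G).Adj (.inl u) (.inl v) ↔ G.Adj u v := by
  simp only [rGraph, SimpleGraph.fromRel_adj]
  exact ⟨fun h => h.2.elim id fun h => h.symm, fun h => ⟨by simpa using h.ne, .inl h⟩⟩

@[simp] lemma rGraph_adj_inl_inr {u : V} {e : G.edgeSet} :
    (rGraph G).Adj (.inl u) (.inr e) ↔ u ∈ (e : Sym2 V) := by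
  simp [rGraph]

@[simp] lemma rGraph_adj_inr_inl {u : V} {e : G.edgeSet} :
    (rGraph G).Adj (.inr e) (.inl u) ↔ u ∈ (e : Sym2 V) := by
  simp [rGraph]

@[simp] lemma rGraph_not_adj_inr_inr {e f : G.edgeSet} : ¬ (rGraph G).Adj (.inr e) (.inr f) := by
  simp [rGraph]

variable [Fintype V]

lemma rGraph_degree_inr (e : G.edgeSet) : (rGraph G).degree (.inr e) = 2 := by
  have : (rGraph G).neighborFinset (.inr e) = (e : Sym2 V).toFinset.disjSum ∅ := by
    ext (u | f) <;> simp
  rw [← SimpleGraph.card_neighborFinset_eq_degree, this, card_disjSum,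
    Sym2.card_toFinset_of_not_isDiag _ (G.not_isDiag_of_mem_edgeSet e.2)]
  rfl

lemma rGraph_degree_inl (u : V) : (rGraph G).degree (.inl u) = 2 * G.degree u := by
  have : (rGraph G).neighborFinset (.inl u) =
      (G.neighborFinset u).disjSum {e : G.edgeSet | u ∈ (e : Sym2 V)} := by
    ext (v | f) <;> simp
  have hinc : #{e : G.edgeSet | u ∈ (e : Sym2 V)} = G.degree u := by
    rw [← G.card_incidenceFinset_eq_degree, ← card_map (.subtype _)]
    congr 1
    ext e
    simp [SimpleGraph.incidenceSet, and_comm]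
  rw [← SimpleGraph.card_neighborFinset_eq_degree, this, card_disjSum, hinc,
    SimpleGraph.card_neighborFinset_eq_degree, two_mul]

lemma card_edgeFinset_rGraph : #(rGraph G).edgeFinset = 3 * #G.edgeFinset := by
  have hdeg := (rGraph G).sum_degrees_eq_twice_card_edges
  rw [Fintype.sum_sum_type] at hdeg
  simp only [rGraph_degree_inl, rGraph_degree_inr, ← mul_sum, G.sum_degrees_eq_twice_card_edges,
    sum_const, card_univ, smul_eq_mul] at hdeg
  rw [← SimpleGraph.edgeFinset_card] at hdeg
  omega

end rGraph

section fSum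

variable {V E W : Type*} {K : SimpleGraph (V ⊕ E)} {H : SimpleGraph W}

lemma fSum_adj {a b : (V ⊕ E) × W} : (fSum K H).Adj a b ↔
    (a.1 = b.1 ∧ (∃ u, a.1 = .inl u) ∧ H.Adj a.2 b.2) ∨ (a.2 = b.2 ∧ K.Adj a.1 b.1) := by
  rw [fSum, SimpleGraph.fromRel_adj]
  constructor
  · rintro ⟨-, h | ⟨h₁, h₂, h₃⟩ | ⟨h₁, h₂⟩⟩
    · exact h
    · exact .inl ⟨h₁.symm, h₁ ▸ h₂, h₃.symm⟩
    · exact .inr ⟨h₁.symm, h₂.symm⟩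
  · rintro (h | h)
    · exact ⟨fun hab => h.2.2.ne (by rw [hab]), .inl (.inl h)⟩
    · exact ⟨fun hab => h.2.ne (by rw [hab]), .inl (.inr h)⟩

def fSumLayer (K : SimpleGraph (V ⊕ E)) (H : SimpleGraph W) (j : W) : K ↪g fSum K H where
  toFun x := (x, j)
  inj' _ _ h := congrArg Prod.fst h
  map_rel_iff' {x y} := by
    change (fSum K H).Adj (x, j) (y, j) ↔ _
    simp [fSum_adj]

end fSum

section fSumPathGraph

variable {V E : Type*} {m : ℕ}

lemma fSum_pathGraph_rank_ne {K : SimpleGraph (V ⊕ E)} {κ : V ⊕ E → ℕ}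
    (hκ : ∀ x y, K.Adj x y → κ x ≠ κ y) (p q : (V ⊕ E) × Fin m)
    (h : (fSum K (SimpleGraph.pathGraph m)).Adj p q) : (p.2 : ℕ) + κ p.1 ≠ q.2 + κ q.1 := by
  rcases fSum_adj.1 h with ⟨h₁, -, h₂⟩ | ⟨h₂, h₁⟩
  · rw [SimpleGraph.pathGraph_adj] at h₂
    rw [h₁]
    omega
  · rw [h₂]
    have := hκ _ _ h₁
    omega

lemma card_upNeighborFinset_fSum_pathGraph_le [Fintype V] [Fintype E]
    (K : SimpleGraph (V ⊕ E)) (κ : V ⊕ E → ℕ) (x : V ⊕ E) (j : Fin m) :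
    #(upNeighborFinset (fSum K (SimpleGraph.pathGraph m)) (fun p => p.2 + κ p.1) (x, j)) ≤
      #(upNeighborFinset K κ x) + if x.isLeft then 1 else 0 := by
  -- only an original vertex has a vertical edge to a higher rank, namely to layer `j + 1`
  set vertical := univ.filter fun w : (V ⊕ E) × Fin m => w.1 = x ∧ x.isLeft ∧ w.2.val = j + 1
  have hsub : upNeighborFinset (fSum K (SimpleGraph.pathGraph m)) (fun p => p.2 + κ p.1) (x, j)
      ⊆ (upNeighborFinset K κ x).map (fSumLayer K (SimpleGraph.pathGraph m) j).toEmbedding ∪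
        vertical := by
    rintro ⟨y, i⟩ hy
    simp only [upNeighborFinset, mem_filter, mem_univ, true_and, fSum_adj,
      SimpleGraph.pathGraph_adj] at hy
    obtain ⟨⟨rfl, ⟨u, rfl⟩, hji⟩ | ⟨rfl, hxy⟩, hρ⟩ := hy
    · refine mem_union_right _ (mem_filter.2 ⟨mem_univ _, rfl, rfl, ?_⟩)
      change (i : ℕ) = j + 1
      omega
    · exact mem_union_left _ (mem_map_of_mem _ (mem_filter.2 ⟨mem_univ _, hxy, by omega⟩))
  have hvertical : #vertical ≤ if x.isLeft then 1 else 0 := by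
    split_ifs with hx
    · refine card_le_one.2 fun a ha b hb => ?_
      simp only [vertical, mem_filter, mem_univ, true_and] at ha hb
      exact Prod.ext (ha.1.trans hb.1.symm) (Fin.ext (ha.2.2.trans hb.2.2.symm))
    · simp [vertical, hx]
  calc _ ≤ _ := card_le_card hsub
    _ ≤ _ := card_union_le _ _
    _ ≤ _ := by rw [card_map]; gcongr

end fSumPathGraph

section Star

variable {n : ℕ}

lemma card_edgeFinset_starGraph : #(starGraph n).edgeFinset = n := by
  have h := SimpleGraph.encard_edgeSet_completeBipartiteGraph (W₁ := Fin 1) (W₂ := Fin n)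
  rw [← SimpleGraph.coe_edgeFinset, Set.encard_coe_eq_coe_finsetCard,
    ENat.card_eq_coe_fintype_card, ENat.card_eq_coe_fintype_card] at h
  simp only [Fintype.card_fin, Nat.cast_one, one_mul, Nat.cast_inj] at h
  unfold starGraph
  convert h

def starRank : (Fin 1 ⊕ Fin n) ⊕ (starGraph n).edgeSet → ℕ
  | .inl (.inl _) => 2
  | .inl (.inr _) => 1
  | .inr _ => 0

lemma starRank_ne_of_adj {x y : (Fin 1 ⊕ Fin n) ⊕ (starGraph n).edgeSet}
    (h : (rGraph (starGraph n)).Adj x y) : starRank x ≠ starRank y := by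
  rcases x with (a | a) | e <;> rcases y with (b | b) | f <;> simp [starRank] at h ⊢ <;>
    simp [starGraph] at h

lemma card_upNeighborFinset_starRank_add_le (x : (Fin 1 ⊕ Fin n) ⊕ (starGraph n).edgeSet) :
    #(upNeighborFinset (rGraph (starGraph n)) starRank x) + (if x.isLeft then 1 else 0) ≤ 2 := by
  rcases x with (a | i) | e
  · have : upNeighborFinset (rGraph (starGraph n)) starRank (.inl (.inl a)) = ∅ := by
      refine filter_eq_empty_iff.2 fun y _ => ?_
      rcases y with (b | b) | f <;> simp [starRank]
    simp [this]
  · have : upNeighborFinset (rGraph (starGraph n)) starRank (.inl (.inr i)) ⊆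
        {.inl (.inl 0)} := by
      intro y hy
      rw [upNeighborFinset, mem_filter] at hy
      rcases y with (b | b) | f <;> simp [starRank, Fin.fin_one_eq_zero] at hy ⊢
    have hcard := (card_le_card this).trans_eq (card_singleton _)
    simp only [Sum.isLeft_inl, if_true]
    omega
  · have : upNeighborFinset (rGraph (starGraph n)) starRank (.inr e) ⊆
        (rGraph (starGraph n)).neighborFinset (.inr e) := fun y hy =>
      (SimpleGraph.mem_neighborFinset _ _ _).2 (mem_filter.1 hy).2.1
    have hcard := card_le_card this
    rw [SimpleGraph.card_neighborFinset_eq_degree, rGraph_degree_inr] at hcard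
    simpa using hcard

lemma exists_isATOrientation_rSum_starGraph_pathGraph (m : ℕ) :
    ∃ A, IsOrientation (rSum (starGraph n) (SimpleGraph.pathGraph m)) A ∧ IsATOrientation A ∧
      ∀ v, arcOutDeg A v < 3 :=
  ⟨rankOrientation _ fun p => p.2 + starRank p.1,
    isOrientation_rankOrientation _ _ (fSum_pathGraph_rank_ne fun _ _ => starRank_ne_of_adj),
    isATOrientation_rankOrientation _ _, fun ⟨x, j⟩ => by
      rw [arcOutDeg_rankOrientation]
      exact Nat.lt_succ_of_le <|
        (card_upNeighborFinset_fSum_pathGraph_le (rGraph (starGraph n)) starRank x j).trans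
          (card_upNeighborFinset_starRank_add_le x)⟩

lemma three_le_of_isOrientation_rSum_starGraph_pathGraph {m : ℕ} (hn : 2 ≤ n) (hm : 0 < m)
    {A : Finset _} (hA : IsOrientation (rSum (starGraph n) (SimpleGraph.pathGraph m)) A) {k : ℕ}
    (hk : ∀ v, arcOutDeg A v < k) : 3 ≤ k := by
  by_contra! hk3
  let f := fSumLayer (rGraph (starGraph n)) (SimpleGraph.pathGraph m) ⟨0, hm⟩
  have hedges := card_edgeFinset_le_of_isOrientation (isOrientation_pullbackArcs f hA) (d := 1)
    fun v => (arcOutDeg_pullbackArcs_le f.injective v).trans (by have := hk (f v); omega)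
  rw [card_edgeFinset_rGraph, card_edgeFinset_starGraph, Fintype.card_sum, Fintype.card_sum,
    ← SimpleGraph.edgeFinset_card, card_edgeFinset_starGraph] at hedges
  simp only [Fintype.card_fin] at hedges
  omega

end Star

/-- `AT(S_n +_R P_m) = 3` for `n ≥ 3`, `m ≥ 2`. -/
theorem stmt11 (n m : ℕ) (hn : 3 ≤ n) (hm : 2 ≤ m) :
    alonTarsiNumber (rSum (starGraph n) (SimpleGraph.pathGraph m)) = 3 :=
  alonTarsiNumber_eq (exists_isATOrientation_rSum_starGraph_pathGraph m) fun _ _ hA _ hk =>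
    three_le_of_isOrientation_rSum_starGraph_pathGraph (by omega) (by omega) hA hk
end

section
/- For every integer n ≥ 4, the subdivision graph S(K_n) of the complete graph K_n satisfies AT(S(K_n)) = 3. -/
open scoped Classical

/-!
Upper bound: direct every edge `u–e` of `S(K_n)` from the subdivision vertex `e` to `u`.
Outdegrees are at most 2, and since every arc ends in a sink, the empty set is the only
Eulerian subdigraph, so the orientation is Alon–Tarsi.

Lower bound: an orientation with all outdegrees at most 1 has at most `|V(S(K_n))| = n + C(n,2)`
arcs, but `S(K_n)` has `2 C(n,2)` edges, which is more as soon as `C(n,2) > n`, i.e. `n ≥ 4`.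
-/

open Finset

section Orientations

variable {V : Type*}

lemma arcOutDeg_mono {A B : Finset (V × V)} (h : B ⊆ A) (v : V) :
    arcOutDeg B v ≤ arcOutDeg A v :=
  card_le_card (filter_subset_filter _ h)

lemma card_eq_sum_arcOutDeg [Fintype V] (A : Finset (V × V)) :
    #A = ∑ v, arcOutDeg A v :=
  card_eq_sum_card_fiberwise fun a _ => mem_coe.2 (mem_univ a.1)

lemma card_le_mul_card_of_arcOutDeg_le [Fintype V] {A : Finset (V × V)} {d : ℕ}
    (h : ∀ v, arcOutDeg A v ≤ d) : #A ≤ d * Fintype.card V := by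
  rw [card_eq_sum_arcOutDeg, mul_comm, ← smul_eq_mul, ← card_univ, ← sum_const]
  exact sum_le_sum fun v _ => h v

lemma IsOrientation.card_eq_card_edgeFinset {G : SimpleGraph V} [Fintype G.edgeSet]
    {A : Finset (V × V)} (hA : IsOrientation G A) : #A = #G.edgeFinset := by
  refine card_bij (fun a _ => s(a.1, a.2)) (fun a ha => ?_) (fun a ha b hb hab => ?_) ?_
  · simpa using hA.1 a ha
  · rcases Sym2.mk_eq_mk_iff.1 hab with h | rfl
    · exact h
    · exact absurd hb ((hA.2 _ _ (hA.1 _ ha)).1 ha)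
  · intro e he
    induction e using Sym2.ind with
    | _ u v =>
      have huv : G.Adj u v := by simpa using he
      by_cases h : (u, v) ∈ A
      · exact ⟨(u, v), h, rfl⟩
      · exact ⟨(v, u), not_not.1 (mt (hA.2 u v huv).2 h), Sym2.eq_swap⟩

lemma IsOrientation.exists_lt_arcOutDeg [Fintype V] {G : SimpleGraph V} [Fintype G.edgeSet]
    {A : Finset (V × V)} (hA : IsOrientation G A) {d : ℕ}
    (hd : d * Fintype.card V < #G.edgeFinset) : ∃ v, d < arcOutDeg A v := by
  by_contra! h
  have := card_le_mul_card_of_arcOutDeg_le h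
  rw [hA.card_eq_card_edgeFinset] at this
  omega

lemma IsEulerianSub.eq_empty_of_subset_of_forall_arcOutDeg_snd_eq_zero
    {A B : Finset (V × V)} (hB : IsEulerianSub B) (hBA : B ⊆ A)
    (hsink : ∀ a ∈ A, arcOutDeg A a.2 = 0) : B = ∅ := by
  by_contra hne
  obtain ⟨a, ha⟩ := nonempty_iff_ne_empty.2 hne
  have hin : 0 < arcInDeg B a.2 := card_pos.2 ⟨a, mem_filter.2 ⟨ha, rfl⟩⟩
  have hout := arcOutDeg_mono hBA a.2
  rw [hsink a (hBA ha), ← hB] at hout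
  omega

lemma isATOrientation_of_forall_arcOutDeg_snd_eq_zero {A : Finset (V × V)}
    (hsink : ∀ a ∈ A, arcOutDeg A a.2 = 0) : IsATOrientation A := by
  have hodd : (A.powerset.filter fun B => IsEulerianSub B ∧ ¬ Even #B) = ∅ :=
    filter_false_of_mem fun B hB ⟨hE, hodd⟩ =>
      hodd <| by
        rw [hE.eq_empty_of_subset_of_forall_arcOutDeg_snd_eq_zero (mem_powerset.1 hB) hsink]
        exact ⟨0, rfl⟩
  have hempty : ∅ ∈ A.powerset.filter fun B => IsEulerianSub B ∧ Even #B :=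
    mem_filter.2 ⟨empty_mem_powerset A, fun v => by simp [arcInDeg, arcOutDeg], ⟨0, rfl⟩⟩
  rw [IsATOrientation, hodd, card_empty]
  exact card_ne_zero_of_mem hempty

lemma alonTarsiNumber_eq_of_isATOrientation {G : SimpleGraph V} {A : Finset (V × V)} {k : ℕ}
    (hA : IsOrientation G A) (hAT : IsATOrientation A) (hk : ∀ v, arcOutDeg A v < k)
    (hmin : ∀ B, IsOrientation G B → IsATOrientation B → ∃ v, k ≤ arcOutDeg B v + 1) :
    alonTarsiNumber G = k := by
  refine le_antisymm (Nat.sInf_le ⟨A, hA, hAT, hk⟩) (le_csInf ⟨k, A, hA, hAT, hk⟩ ?_)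
  rintro m ⟨B, hB, hBAT, hm⟩
  obtain ⟨v, hv⟩ := hmin B hB hBAT
  exact hv.trans (hm v)

end Orientations

section Subdivision

variable {V : Type*} (G : SimpleGraph V)

@[simp]
lemma subdivisionGraph_adj_inl_inr {u : V} {e : G.edgeSet} :
    (subdivisionGraph G).Adj (.inl u) (.inr e) ↔ u ∈ (e : Sym2 V) := by
  simp [subdivisionGraph]

@[simp]
lemma subdivisionGraph_adj_inr_inl {u : V} {e : G.edgeSet} :
    (subdivisionGraph G).Adj (.inr e) (.inl u) ↔ u ∈ (e : Sym2 V) := by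
  simp [subdivisionGraph]

@[simp]
lemma subdivisionGraph_not_adj_inl_inl {u v : V} :
    ¬ (subdivisionGraph G).Adj (.inl u) (.inl v) := by
  simp [subdivisionGraph]

@[simp]
lemma subdivisionGraph_not_adj_inr_inr {e f : G.edgeSet} :
    ¬ (subdivisionGraph G).Adj (.inr e) (.inr f) := by
  simp [subdivisionGraph]

variable [Fintype V]

noncomputable def subdivisionOrientation : Finset ((V ⊕ G.edgeSet) × (V ⊕ G.edgeSet)) :=
  univ.filter fun a => a.1.isRight ∧ (subdivisionGraph G).Adj a.1 a.2

lemma isOrientation_subdivisionOrientation :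
    IsOrientation (subdivisionGraph G) (subdivisionOrientation G) := by
  refine ⟨fun a ha => (mem_filter.1 ha).2.2, ?_⟩
  rintro (u | e) (v | f) h <;> simp_all [subdivisionOrientation]

@[simp]
lemma arcOutDeg_subdivisionOrientation_inl (u : V) :
    arcOutDeg (subdivisionOrientation G) (.inl u) = 0 := by
  simp [arcOutDeg, subdivisionOrientation, filter_eq_empty_iff]

@[simp]
lemma arcOutDeg_subdivisionOrientation_inr (e : G.edgeSet) :
    arcOutDeg (subdivisionOrientation G) (.inr e) = 2 := by
  unfold arcOutDeg
  convert (card_image_of_injective (e : Sym2 V).toFinset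
    (f := fun u => ((.inr e, .inl u) : (V ⊕ G.edgeSet) × (V ⊕ G.edgeSet)))
    fun u v h => by simpa using h).trans
      (Sym2.card_toFinset_of_not_isDiag _ (G.not_isDiag_of_mem_edgeSet e.2)) using 2
  ext ⟨a, b⟩
  rcases b with u | f <;> aesop (add simp subdivisionOrientation)

lemma isATOrientation_subdivisionOrientation :
    IsATOrientation (subdivisionOrientation G) := by
  refine isATOrientation_of_forall_arcOutDeg_snd_eq_zero fun ⟨a, b⟩ h => ?_
  rcases b with v | f
  · exact arcOutDeg_subdivisionOrientation_inl G v
  · rcases a with u | e <;> simp [subdivisionOrientation] at h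

lemma card_edgeFinset_subdivisionGraph [Fintype (subdivisionGraph G).edgeSet] :
    #(subdivisionGraph G).edgeFinset = 2 * Fintype.card G.edgeSet := by
  rw [← (isOrientation_subdivisionOrientation G).card_eq_card_edgeFinset, card_eq_sum_arcOutDeg,
    Fintype.sum_sum_type]
  simp [mul_comm]

end Subdivision

lemma Nat.lt_choose_two {n : ℕ} (hn : 4 ≤ n) : n < n.choose 2 := by
  obtain ⟨m, rfl⟩ := Nat.exists_eq_add_of_le' hn
  rw [Nat.choose_two_right, Nat.lt_iff_add_one_le, Nat.le_div_iff_mul_le two_pos]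
  show (m + 4 + 1) * 2 ≤ (m + 4) * (m + 3)
  nlinarith

/-- `AT(S(K_n)) = 3` for every `n ≥ 4`. -/
theorem stmt19 (n : ℕ) (hn : 4 ≤ n) :
    alonTarsiNumber (subdivisionGraph (SimpleGraph.completeGraph (Fin n))) = 3 := by
  set G := SimpleGraph.completeGraph (Fin n)
  refine alonTarsiNumber_eq_of_isATOrientation (isOrientation_subdivisionOrientation G)
    (isATOrientation_subdivisionOrientation G) ?_ fun B hB _ => ?_
  · rintro (u | e) <;> simp
  have hE : Nat.card G.edgeSet = n.choose 2 := by
    rw [Nat.card_eq_fintype_card, ← SimpleGraph.edgeFinset_card,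
      SimpleGraph.card_edgeFinset_top_eq_card_choose_two, Fintype.card_fin]
  obtain ⟨v, hv⟩ := hB.exists_lt_arcOutDeg (d := 1) (by
    rw [card_edgeFinset_subdivisionGraph, Fintype.card_sum, Fintype.card_fin]
    simp only [Fintype.card_eq_nat_card, hE]
    linarith [Nat.lt_choose_two hn])
  exact ⟨v, by omega⟩
end
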